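/- arXiv:2003.11125 — 6 statements merged into one kernel-verified Lean document; each statement's English description precedes it below -/
import Mathlib

section
/- Let L be a finite field with 4 elements, and let α ∈ L satisfy α² + α + 1 = 0. Let m ≥ 3 be odd, let a, b : ℕ → F_2, and view F_2 inside L via the unique ring embedding. Define the polynomials p(x) = ∑_{i<m} (a_i + b_i·α) x^i and p̄(x) = ∑_{i<m} (b_i + a_i·α) x^i in L[x]. Then, as polynomials in L[x], p̄(x^{m−1}) = α · p(x^{(m−1)/2})², i.e. the composition of p̄ with x^{m−1} equals α times the square of the composition of p with x^{(m−1)/2}. -/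
open Polynomial

/-! Since `F_2` is fixed by Frobenius and `α² = α + 1`, the swap `a + bα ↦ b + aα` is
`τ ↦ α τ²`: indeed `α (a + bα)² = α ((a + b) + bα) = b + aα`. Applied coefficientwise this says
`p̄ = α · p^{(2)}`, where `p^{(2)}` squares the coefficients; and in characteristic `2` one has
`p^{(2)}(x^{2k}) = p(x^k)²`. -/

theorem swap_add_mul_eq_mul_sq {R : Type*} [CommRing R] [CharP R 2] {α x y : R}
    (hα : α ^ 2 + α + 1 = 0) (hx : x ^ 2 = x) (hy : y ^ 2 = y) :
    y + x * α = α * (x + y * α) ^ 2 := by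
  have h2 : (2 : R) = 0 := CharP.ofNat_eq_zero R 2
  linear_combination -α * hx - α ^ 3 * hy - y * (α - 1) * hα - x * y * α ^ 2 * h2

theorem ZMod.two_ringHom_apply_sq {R : Type*} [Semiring R] (f : ZMod 2 →+* R) (a : ZMod 2) :
    f a ^ 2 = f a := by
  rw [← map_pow, ZMod.pow_card]

theorem sum_C_swap_mul_X_pow_eq {R : Type*} [CommRing R] [CharP R 2] {α : R}
    (hα : α ^ 2 + α + 1 = 0) (f : ZMod 2 →+* R) (a b : ℕ → ZMod 2) (s : Finset ℕ) :
    ∑ i ∈ s, C (f (b i) + f (a i) * α) * X ^ i =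
      C α * (∑ i ∈ s, C (f (a i) + f (b i) * α) * X ^ i).map (frobenius R 2) := by
  simp only [Polynomial.map_sum, Polynomial.map_mul, map_C, Polynomial.map_pow, map_X,
    frobenius_def, Finset.mul_sum, ← mul_assoc, ← C_mul]
  refine Finset.sum_congr rfl fun i _ => ?_
  rw [swap_add_mul_eq_mul_sq hα (ZMod.two_ringHom_apply_sq f _)
    (ZMod.two_ringHom_apply_sq f _)]

theorem map_frobenius_comp_X_pow_mul {R : Type*} [CommSemiring R] (p : ℕ) [ExpChar R p]
    (q : R[X]) (k : ℕ) :
    (q.map (frobenius R p)).comp (X ^ (p * k)) = (q.comp (X ^ k)) ^ p := by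
  rw [← expand_eq_comp_X_pow, ← expand_eq_comp_X_pow, expand_mul, ← map_expand, ← map_expand,
    map_frobenius_expand]

theorem binary_companion_formula_general
    (L : Type*) [Field L]
    (α : L) (hα : α ^ 2 + α + 1 = 0)
    (m : ℕ) (hodd : Odd m)
    (f : ZMod 2 →+* L) (a b : ℕ → ZMod 2) :
    let p : L[X] := ∑ i ∈ Finset.range m, C (f (a i) + f (b i) * α) * X ^ i
    let pbar : L[X] := ∑ i ∈ Finset.range m, C (f (b i) + f (a i) * α) * X ^ i
    pbar.comp (X ^ (m - 1)) = C α * (p.comp (X ^ ((m - 1) / 2))) ^ 2 := by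
  intro p pbar
  have : CharP L 2 := charP_of_injective_ringHom f.injective 2
  obtain ⟨k, rfl⟩ := hodd
  have hpbar : pbar = C α * p.map (frobenius L 2) := sum_C_swap_mul_X_pow_eq hα f a b _
  rw [Nat.add_sub_cancel, Nat.mul_div_cancel_left k two_pos, hpbar, mul_comp, C_comp,
    map_frobenius_comp_X_pow_mul]

/-- Over `F_4 = F_2[α]` with `α² + α + 1 = 0`, for `m ≥ 3` odd and
`p(x) = ∑_{i<m} (a_i + b_i α) x^i`, `p̄(x) = ∑_{i<m} (b_i + a_i α) x^i`,
one has `p̄(x^{m−1}) = α · p(x^{(m−1)/2})²` as polynomials in `F_4[x]`. -/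
theorem binary_companion_formula
    (L : Type*) [Field L] [Fintype L] (hcard : Fintype.card L = 4)
    (α : L) (hα : α ^ 2 + α + 1 = 0)
    (m : ℕ) (hm : 3 ≤ m) (hodd : Odd m)
    (f : ZMod 2 →+* L) (a b : ℕ → ZMod 2) :
    let p : L[X] := ∑ i ∈ Finset.range m, C (f (a i) + f (b i) * α) * X ^ i
    let pbar : L[X] := ∑ i ∈ Finset.range m, C (f (b i) + f (a i) * α) * X ^ i
    pbar.comp (X ^ (m - 1)) = C α * (p.comp (X ^ ((m - 1) / 2))) ^ 2 :=
  binary_companion_formula_general L α hα m hodd f a b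
end

section
/- (BCH bound.) Let E be a field, m ≥ 1, and let ω ∈ E be a primitive m-th root of unity (i.e. ω has multiplicative order exactly m). Let δ, b be integers with 2 ≤ δ ≤ m + 1. Let c ∈ E[x] be a nonzero polynomial with deg c < m such that c(ω^{b+j}) = 0 for all 0 ≤ j ≤ δ − 2. Then c has at least δ nonzero coefficients. -/
/-!
Write `c(ω^(b+j)) = ∑_{k ∈ supp c} (c_k ω^(bk)) (ω^k)^j`. If `c` had `n < δ` nonzero coefficients,
the first `n` of these vanishing sums would form a square Vandermonde system in the nodes `ω^k`,
which are distinct because `k < m = ord ω`; so every weight `c_k ω^(bk)` would vanish, hence `c = 0`.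
-/

open Polynomial

theorem Finset.eq_zero_of_forall_sum_mul_pow_eq_zero {R ι : Type*} [CommRing R] [IsDomain R]
    {s : Finset ι} {f v : ι → R} (hf : Set.InjOn f s)
    (h : ∀ j < s.card, ∑ i ∈ s, v i * f i ^ j = 0) : ∀ i ∈ s, v i = 0 := by
  let e := s.equivFin.symm
  have he_inj : Function.Injective (f ∘ (↑) ∘ e) := fun a b hab =>
    e.injective (Subtype.ext (hf (e a).2 (e b).2 hab))
  have hv : (v ∘ (↑) ∘ e) = 0 := by
    refine Matrix.eq_zero_of_forall_pow_sum_mul_pow_eq_zero he_inj fun j => ?_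
    rw [← h j j.2, ← s.sum_coe_sort]
    exact e.sum_comp fun i : s => v i * f i ^ (j : ℕ)
  intro i hi
  simpa [e] using congrFun hv (s.equivFin ⟨i, hi⟩)

theorem Polynomial.eq_zero_of_eval_mul_pow_eq_zero {R : Type*} [CommRing R] [IsDomain R]
    {p : R[X]} {α β : R} (hβ : β ≠ 0) (hα : Set.InjOn (α ^ ·) p.support)
    (h : ∀ j < p.support.card, p.eval (β * α ^ j) = 0) : p = 0 := by
  have hweights := Finset.eq_zero_of_forall_sum_mul_pow_eq_zero
    (v := fun k => p.coeff k * β ^ k) hα fun j hj => by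
      rw [← h j hj, eval_eq_sum, sum_def]
      refine Finset.sum_congr rfl fun k _ => ?_
      rw [mul_pow, pow_right_comm, mul_assoc]
  rw [← support_eq_empty, Finset.eq_empty_iff_forall_notMem]
  intro k hk
  exact mul_ne_zero (mem_support_iff.mp hk) (pow_ne_zero k hβ) (hweights k hk)

theorem bch_bound_general
    (E : Type*) [Field E] (m : ℕ)
    (ω : E) (hω : orderOf ω = m)
    (δ : ℕ) (b : ℤ)
    (c : E[X]) (hc : c ≠ 0) (hdeg : c.natDegree < m)
    (hroots : ∀ j : ℕ, j ≤ δ - 2 → c.eval (ω ^ (b + j)) = 0) :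
    δ ≤ c.support.card := by
  have hω_ne : ω ≠ 0 :=
    (orderOf_pos_iff.mp (hω ▸ Nat.zero_lt_of_lt hdeg)).isUnit.ne_zero
  have hsupp_lt : ∀ k ∈ c.support, k < orderOf ω := fun k hk =>
    hω ▸ (le_natDegree_of_mem_supp k hk).trans_lt hdeg
  by_contra! hlt
  refine hc (eq_zero_of_eval_mul_pow_eq_zero (zpow_ne_zero b hω_ne)
    (fun k hk l hl => pow_injOn_Iio_orderOf (hsupp_lt k hk) (hsupp_lt l hl)) fun j hj => ?_)
  rw [← zpow_natCast, ← zpow_add₀ hω_ne]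
  exact hroots j (by omega)

/-- (BCH bound.) If `ω ∈ E` is a primitive `m`-th root of unity, `2 ≤ δ ≤ m+1`,
and a nonzero polynomial `c` with `deg c < m` vanishes at the `δ − 1`
consecutive powers `ω^b, ω^{b+1}, …, ω^{b+δ−2}`, then `c` has at least `δ`
nonzero coefficients. -/
theorem bch_bound
    (E : Type*) [Field E] (m : ℕ) (hm : 1 ≤ m)
    (ω : E) (hω : orderOf ω = m)
    (δ : ℕ) (b : ℤ) (hδ2 : 2 ≤ δ) (hδm : δ ≤ m + 1)
    (c : E[X]) (hc : c ≠ 0) (hdeg : c.natDegree < m)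
    (hroots : ∀ j : ℕ, j ≤ δ - 2 → c.eval (ω ^ (b + j)) = 0) :
    δ ≤ c.support.card :=
  bch_bound_general E m ω hω δ b c hc hdeg hroots
end

section
/- (BCH bound for principal dihedral codes, folded form.) Let L be a field, E a field extension of L, m ≥ 3, and let ω ∈ E be a primitive m-th root of unity. Let δ, b be integers with 2 ≤ δ ≤ m + 1. Let p, P ∈ L[x] be polynomials such that p(ω^{b+j}) = 0 and P(ω^{b+j}) = 0 for all 0 ≤ j ≤ δ − 2 (evaluation via the inclusion L ⊆ E). Then for all t₁, t₂ ∈ L[x], the remainder c of t₁·p + t₂·P upon division by x^m − 1 satisfies: if c ≠ 0 then c has at least δ nonzero coefficients. In particular, the dihedral code generated by p has minimum distance at least δ. -/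
/-!
Reduce `t₁ p + t₂ P` modulo `X^m - 1` to `c`. Since `(ω^(b+j))^m = 1`, `c` still vanishes at the
`δ - 1` consecutive powers `ω^(b+j)`, and `deg c < m = orderOf ω` makes the powers `ω^i`,
`i ∈ supp c`, pairwise distinct. If `c` had at most `δ - 1` nonzero coefficients, these roots would
give a square linear system for them whose matrix is a Vandermonde matrix in the `ω^i` with columns
scaled by `(ω^i)^b ≠ 0`; it is invertible, so `c = 0`.
-/

open Polynomial

theorem Matrix.eq_zero_of_forall_sum_mul_zpow_add_eq_zero {K : Type*} [Field K] {n : ℕ}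
    {x v : Fin n → K} (hx : Function.Injective x) (hx0 : ∀ i, x i ≠ 0) (b : ℤ)
    (h : ∀ j : Fin n, ∑ i, v i * x i ^ (b + j) = 0) : v = 0 := by
  have hw : (fun i => v i * x i ^ b) = 0 :=
    eq_zero_of_forall_pow_sum_mul_pow_eq_zero hx fun j => by
      simpa only [zpow_add₀ (hx0 _), zpow_natCast, mul_assoc] using h j
  funext i
  simpa [zpow_ne_zero b (hx0 i)] using congrFun hw i

theorem Polynomial.lt_card_support_of_eval_zpow_add_eq_zero {K : Type*} [Field K] {c : K[X]}
    (hc : c ≠ 0) {ω : K} (hdeg : c.natDegree < orderOf ω) (b : ℤ) (n : ℕ)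
    (hroot : ∀ j < n, c.eval (ω ^ (b + j)) = 0) : n < c.support.card := by
  by_contra! hcard
  have hω : ω ≠ 0 := fun h0 => by simp [h0] at hdeg
  set e := c.support.equivFin
  let d : Fin c.support.card → ℕ := fun i => e.symm i
  have hd : ∀ i, d i < orderOf ω := fun i =>
    (le_natDegree_of_mem_supp _ (e.symm i).2).trans_lt hdeg
  have hx : Function.Injective fun i => ω ^ d i := fun i k h =>
    e.symm.injective (Subtype.ext (pow_injOn_Iio_orderOf (hd i) (hd k) h))
  have hv : (fun i => c.coeff (d i)) = 0 :=
    Matrix.eq_zero_of_forall_sum_mul_zpow_add_eq_zero hx (fun i => pow_ne_zero _ hω) b fun j => by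
      rw [← hroot j (by omega), eval_eq_sum, sum_def, ← c.support.sum_coe_sort,
        ← e.symm.sum_comp]
      refine Finset.sum_congr rfl fun i _ => ?_
      rw [← zpow_natCast, ← zpow_natCast (ω ^ (b + j)), ← zpow_mul, ← zpow_mul, mul_comm (b + _)]
  obtain ⟨i, hi⟩ := nonempty_support_iff.2 hc
  exact mem_support_iff.1 hi (by simpa [d] using congrFun hv (e ⟨i, hi⟩))

theorem Polynomial.natDegree_modByMonic_X_pow_sub_one_lt {R : Type*} [Ring R] [Nontrivial R]
    (p : R[X]) {m : ℕ} (hm : m ≠ 0) : (p %ₘ (X ^ m - 1)).natDegree < m := by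
  have hq : (X ^ m - 1 : R[X]).natDegree = m := by
    simpa using natDegree_X_pow_sub_C (n := m) (r := (1 : R))
  have hmonic : (X ^ m - 1 : R[X]).Monic := by simpa using monic_X_pow_sub_C (1 : R) hm
  calc (p %ₘ (X ^ m - 1)).natDegree < (X ^ m - 1 : R[X]).natDegree :=
        natDegree_modByMonic_lt p hmonic fun h => hm (by simpa [h] using hq.symm)
    _ = m := hq

theorem bch_bound_for_principal_dihedral_codes_general
    (L E : Type*) [Field L] [Field E] [Algebra L E]
    (m : ℕ) (hm : 3 ≤ m)
    (ω : E) (hω : orderOf ω = m)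
    (δ : ℕ) (b : ℤ)
    (p P : L[X])
    (hp : ∀ j : ℕ, j ≤ δ - 2 → Polynomial.aeval (ω ^ (b + j)) p = 0)
    (hP : ∀ j : ℕ, j ≤ δ - 2 → Polynomial.aeval (ω ^ (b + j)) P = 0) :
    ∀ t₁ t₂ : L[X],
      (t₁ * p + t₂ * P) %ₘ (X ^ m - 1) ≠ 0 →
        δ ≤ ((t₁ * p + t₂ * P) %ₘ (X ^ m - 1)).support.card := by
  intro t₁ t₂ hc
  set c := (t₁ * p + t₂ * P) %ₘ (X ^ m - 1)
  have hroot : ∀ j < δ - 1, (c.map (algebraMap L E)).eval (ω ^ (b + j)) = 0 := by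
    intro j hj
    have hunit : (ω ^ (b + j)) ^ m = 1 := by
      rw [← zpow_natCast, ← zpow_mul, mul_comm, zpow_mul, zpow_natCast, ← hω,
        pow_orderOf_eq_one, one_zpow]
    rw [eval_map_algebraMap, aeval_modByMonic_eq_self_of_root (by simp [hunit])]
    simp [hp j (by omega), hP j (by omega)]
  have hbound := lt_card_support_of_eval_zpow_add_eq_zero (Polynomial.map_ne_zero hc)
    (by rw [natDegree_map, hω]; exact natDegree_modByMonic_X_pow_sub_one_lt _ (by omega)) b _ hroot
  rw [support_map_of_injective _ (algebraMap L E).injective] at hbound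
  omega

/-- (BCH bound for principal dihedral codes, folded form.) If `ω ∈ E` is a
primitive `m`-th root of unity, `2 ≤ δ ≤ m+1`, and both `p, P ∈ L[x]` vanish
at the `δ − 1` consecutive powers `ω^b, …, ω^{b+δ−2}` (via `L ⊆ E`), then every
nonzero element `t₁·p + t₂·P mod (x^m − 1)` of the folded code has at least `δ`
nonzero coefficients; hence the dihedral code generated by `p` has minimum
distance at least `δ`. -/
theorem bch_bound_for_principal_dihedral_codes
    (L E : Type*) [Field L] [Field E] [Algebra L E]
    (m : ℕ) (hm : 3 ≤ m)
    (ω : E) (hω : orderOf ω = m)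
    (δ : ℕ) (b : ℤ) (hδ2 : 2 ≤ δ) (hδm : δ ≤ m + 1)
    (p P : L[X])
    (hp : ∀ j : ℕ, j ≤ δ - 2 → Polynomial.aeval (ω ^ (b + j)) p = 0)
    (hP : ∀ j : ℕ, j ≤ δ - 2 → Polynomial.aeval (ω ^ (b + j)) P = 0) :
    ∀ t₁ t₂ : L[X],
      (t₁ * p + t₂ * P) %ₘ (X ^ m - 1) ≠ 0 →
        δ ≤ ((t₁ * p + t₂ * P) %ₘ (X ^ m - 1)).support.card :=
  bch_bound_for_principal_dihedral_codes_general L E m hm ω hω δ b p P hp hP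
end

section
/- Let m ≥ 3 be an odd integer and let c = (m−1)/2 viewed as an element of Z/mZ. For i ∈ Z/mZ let C_i = { 4^k · i : k ∈ ℕ } ⊆ Z/mZ be the 4-cyclotomic coset of i. Then the following are equivalent: (i) c·C_i = C_i for all i ∈ Z/mZ (equivalently, C_{c·i} = C_i for all i); (ii) there exists an integer s ≥ 0 such that 2^{2s+1} ≡ −1 (mod m). -/
/-!
Multiplication by `c` stabilises every coset `{4^k i}` exactly when `c` is itself a power of `4`:
test the coset of `1` for one direction, and for the other use that `4` is a unit of finite
order, so multiplying by `4^s` permutes the powers of `4`. Since `2c = -1` and `2` is a unit,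
`c = 4^s` is the same as `2^(2s+1) = 4^s · 2 = -1`.
-/

/-- `powOrbit 4 i` is the 4-cyclotomic coset `C_i`. -/
def powOrbit {M : Type*} [Monoid M] (a i : M) : Set M :=
  {x | ∃ k : ℕ, x = a ^ k * i}

section Monoid

variable {M : Type*} [Monoid M] {a : M}

theorem mem_powers_of_image_mul_powOrbit_one {b : M}
    (h : (b * ·) '' powOrbit a 1 = powOrbit a 1) : b ∈ Submonoid.powers a := by
  obtain ⟨k, hk⟩ : b ∈ powOrbit a 1 := h ▸ ⟨1, ⟨0, by simp⟩, mul_one b⟩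
  exact ⟨k, by simpa using hk.symm⟩

theorem image_pow_mul_powOrbit (ha : IsOfFinOrder a) (s : ℕ) (i : M) :
    (a ^ s * ·) '' powOrbit a i = powOrbit a i := by
  obtain ⟨e, he⟩ : ∃ e, orderOf a = e + 1 :=
    Nat.exists_eq_succ_of_ne_zero ha.orderOf_pos.ne'
  ext x
  constructor
  · rintro ⟨y, ⟨k, rfl⟩, rfl⟩
    exact ⟨s + k, by simp only [pow_add, mul_assoc]⟩
  · rintro ⟨k, rfl⟩
    refine ⟨a ^ (s * e + k) * i, ⟨s * e + k, rfl⟩, ?_⟩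
    have hexp : s + (s * e + k) = orderOf a * s + k := by rw [he]; ring
    change a ^ s * (a ^ (s * e + k) * i) = a ^ k * i
    rw [← mul_assoc, ← pow_add, hexp, pow_add, pow_mul, pow_orderOf_eq_one, one_pow, one_mul]

theorem forall_image_mul_powOrbit_eq_iff (ha : IsOfFinOrder a) (b : M) :
    (∀ i, (b * ·) '' powOrbit a i = powOrbit a i) ↔ b ∈ Submonoid.powers a := by
  refine ⟨fun h ↦ mem_powers_of_image_mul_powOrbit_one (h 1), ?_⟩
  rintro ⟨s, rfl⟩
  exact image_pow_mul_powOrbit ha s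

end Monoid

theorem two_pow_two_mul_add_one_eq_neg_one_iff {R : Type*} [Ring R] {c : R}
    (h2 : IsUnit (2 : R)) (hc : c * 2 = -1) (s : ℕ) :
    (2 : R) ^ (2 * s + 1) = -1 ↔ (4 : R) ^ s = c := by
  rw [pow_succ, pow_mul, ← hc, h2.mul_left_inj]
  norm_num

theorem ZMod.natCast_half_pred_mul_two {m : ℕ} (hodd : Odd m) :
    (((m - 1) / 2 : ℕ) : ZMod m) * 2 = -1 := by
  obtain ⟨t, rfl⟩ := hodd
  rw [show (2 * t + 1 - 1) / 2 = t by omega]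
  have h := ZMod.natCast_self (2 * t + 1)
  push_cast at h
  linear_combination h

theorem cyclotomic_cosets_stable_iff_power_of_two_general
    (m : ℕ) (hodd : Odd m) :
    (∀ i : ZMod m,
        (fun x : ZMod m => (((m - 1) / 2 : ℕ) : ZMod m) * x) ''
            {x : ZMod m | ∃ k : ℕ, x = 4 ^ k * i} =
          {x : ZMod m | ∃ k : ℕ, x = 4 ^ k * i}) ↔
      (∃ s : ℕ, (2 : ZMod m) ^ (2 * s + 1) = -1) := by
  have : NeZero m := ⟨hodd.pos.ne'⟩
  have h2 : IsUnit (2 : ZMod m) := by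
    exact_mod_cast (ZMod.isUnit_iff_coprime 2 m).mpr (Nat.coprime_two_left.mpr hodd)
  have h4 : IsOfFinOrder (4 : ZMod m) := by
    rw [show (4 : ZMod m) = 2 ^ 2 by norm_num]
    exact h2.isOfFinOrder.pow
  refine (forall_image_mul_powOrbit_eq_iff h4 _).trans ?_
  simp only [Submonoid.mem_powers_iff,
    two_pow_two_mul_add_one_eq_neg_one_iff h2 (ZMod.natCast_half_pred_mul_two hodd)]

/-- For `m ≥ 3` odd and `c = (m−1)/2 ∈ Z/mZ`, the multiplication-by-`c` map
stabilises every 4-cyclotomic coset `C_i = {4^k·i : k ∈ ℕ}` if and only if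
there exists `s ≥ 0` with `2^{2s+1} ≡ −1 (mod m)`. -/
theorem cyclotomic_cosets_stable_iff_power_of_two
    (m : ℕ) (hm : 3 ≤ m) (hodd : Odd m) :
    (∀ i : ZMod m,
        (fun x : ZMod m => (((m - 1) / 2 : ℕ) : ZMod m) * x) ''
            {x : ZMod m | ∃ k : ℕ, x = 4 ^ k * i} =
          {x : ZMod m | ∃ k : ℕ, x = 4 ^ k * i}) ↔
      (∃ s : ℕ, (2 : ZMod m) ^ (2 * s + 1) = -1) :=
  cyclotomic_cosets_stable_iff_power_of_two_general m hodd
end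

section
/- Let L be a finite field with 4 elements, let E be a finite field extension of L, let m ≥ 3 be odd, and let ω ∈ E have multiplicative order exactly m. For i ∈ ℕ let Z_i = { x ∈ E : M_{ω^i}(x) = 0 } be the set of roots in E of the minimal polynomial M_{ω^i} of ω^i over L. Then the following are equivalent: (i) for every i, the image of Z_i under the map x ↦ x^{(m−1)/2} equals Z_i; (ii) there exists an integer s ≥ 0 such that 2^{2s+1} ≡ −1 (mod m). -/
/-!
Over `F_4` the roots of `M_{ω^i}` form the Frobenius orbit `{ω^(i·4^k)}`. Put `e = (m-1)/2`.
If `e ≡ 4^s (mod m)`, then `x ↦ x^e` agrees on `⟨ω⟩` with the `s`-th power of Frobenius, an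
automorphism over `F_4`, which permutes the roots of every polynomial over `F_4`. Conversely,
stability of `Z_1 ∋ ω` puts `ω^e` in the orbit of `ω`, i.e. `e ≡ 4^k`. Finally `2e ≡ -1` and
`2` is invertible mod `m`, so `e ≡ 4^s` is the same as `2^(2s+1) ≡ -1`.
-/

open Polynomial

theorem ZMod.two_mul_natCast_half_pred {m : ℕ} (hm : Odd m) :
    (2 : ZMod m) * ((m - 1) / 2 : ℕ) = -1 := by
  obtain ⟨j, rfl⟩ := hm
  have : ((2 * j + 1 : ℕ) : ZMod (2 * j + 1)) = 0 := ZMod.natCast_self _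
  rw [show (2 * j + 1 - 1) / 2 = j by omega, eq_neg_iff_add_eq_zero, ← this]
  push_cast; ring

theorem ZMod.two_pow_two_mul_add_one_eq_neg_one_iff {m : ℕ} (hm : Odd m) (s : ℕ) :
    (2 : ZMod m) ^ (2 * s + 1) = -1 ↔ (((m - 1) / 2 : ℕ) : ZMod m) = 4 ^ s := by
  have hunit : IsUnit (2 : ZMod m) := by
    simpa using (ZMod.isUnit_iff_coprime 2 m).2 hm.coprime_two_left
  rw [← two_mul_natCast_half_pred hm, pow_succ', pow_mul, hunit.mul_right_inj, eq_comm]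
  norm_num

theorem AlgEquiv.image_setOf_aeval_eq_zero {R A : Type*} [CommSemiring R] [Semiring A]
    [Algebra R A] (σ : A ≃ₐ[R] A) (p : R[X]) :
    σ '' {x | aeval x p = 0} = {x | aeval x p = 0} := by
  ext x
  refine ⟨?_, fun hx => ⟨σ.symm x, ?_, σ.apply_symm_apply x⟩⟩
  · rintro ⟨y, hy, rfl⟩
    rw [Set.mem_ofPred_eq, aeval_algEquiv, AlgHom.comp_apply, hy, map_zero]
  · rw [Set.mem_ofPred_eq, aeval_algEquiv, AlgHom.comp_apply, hx, map_zero]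

namespace FiniteField

variable {K E : Type*} [Field K] [Fintype K] [Field E] [Finite E] [Algebra K E]

theorem aeval_minpoly_eq_zero_iff {x y : E} :
    aeval x (minpoly K y) = 0 ↔ ∃ k : ℕ, x = y ^ Fintype.card K ^ k := by
  have frob_pow_apply (k : ℕ) (z : E) :
      (frobeniusAlgHom K E ^ k) z = z ^ Fintype.card K ^ k := by
    rw [AlgHom.coe_pow, coe_frobeniusAlgHom, pow_iterate]
  constructor
  · intro hx
    obtain ⟨φ, rfl⟩ :=
      IntermediateField.exists_algHom_of_splits_of_aeval (normal_iff.mp inferInstance) hx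
    obtain ⟨k, rfl⟩ := (bijective_frobeniusAlgHom_pow K E).2 φ
    exact ⟨k, frob_pow_apply k y⟩
  · rintro ⟨k, rfl⟩
    rw [← frob_pow_apply, aeval_algHom_apply, minpoly.aeval, map_zero]

end FiniteField

/-- For `L = F_4`, `ω` of multiplicative order `m` (`m ≥ 3` odd) in a finite
extension `E`, and `Z_i` the set of roots in `E` of the minimal polynomial of
`ω^i` over `L`, the map `x ↦ x^{(m−1)/2}` stabilises every `Z_i` if and only if
there exists `s ≥ 0` with `2^{2s+1} ≡ −1 (mod m)`. -/
theorem roots_stable_under_half_power_iff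
    (L E : Type*) [Field L] [Field E] [Algebra L E]
    [Fintype L] [Fintype E] (hcard : Fintype.card L = 4)
    (m : ℕ) (hm : 3 ≤ m) (hodd : Odd m)
    (ω : E) (hω : orderOf ω = m) :
    (∀ i : ℕ,
        (fun x : E => x ^ ((m - 1) / 2)) ''
            {x : E | Polynomial.aeval x (minpoly L (ω ^ i)) = 0} =
          {x : E | Polynomial.aeval x (minpoly L (ω ^ i)) = 0}) ↔
      (∃ s : ℕ, (2 : ZMod m) ^ (2 * s + 1) = -1) := by
  have mem_roots_iff (i : ℕ) (x : E) :
      aeval x (minpoly L (ω ^ i)) = 0 ↔ ∃ k : ℕ, x = ω ^ (i * 4 ^ k) := by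
    simp only [FiniteField.aeval_minpoly_eq_zero_iff, hcard, pow_mul]
  have pow_eq_pow_iff (a b : ℕ) : ω ^ a = ω ^ b ↔ (a : ZMod m) = b := by
    rw [(orderOf_pos_iff.mp (by omega)).pow_eq_pow_iff_modEq, hω, ZMod.natCast_eq_natCast_iff]
  simp only [ZMod.two_pow_two_mul_add_one_eq_neg_one_iff hodd]
  constructor
  · intro hstable
    have hmem : ω ^ ((m - 1) / 2) ∈ (fun x : E => x ^ ((m - 1) / 2)) ''
        {x : E | aeval x (minpoly L (ω ^ 1)) = 0} :=
      ⟨ω, by simp [minpoly.aeval], rfl⟩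
    obtain ⟨k, hk⟩ := (mem_roots_iff 1 _).1 (hstable 1 ▸ hmem)
    exact ⟨k, by simpa using (pow_eq_pow_iff _ _).1 hk⟩
  · rintro ⟨s, hs⟩ i
    calc (fun x : E => x ^ ((m - 1) / 2)) '' {x | aeval x (minpoly L (ω ^ i)) = 0}
        = ⇑(FiniteField.frobeniusAlgEquivOfAlgebraic L E ^ s) ''
            {x | aeval x (minpoly L (ω ^ i)) = 0} := by
          refine Set.image_congr fun x hx => ?_
          obtain ⟨k, rfl⟩ := (mem_roots_iff i x).1 hx
          simp only [AlgEquiv.coe_pow, FiniteField.coe_frobeniusAlgEquivOfAlgebraic_iterate, hcard,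
            ← pow_mul, pow_eq_pow_iff]
          push_cast
          rw [hs]
      _ = _ := AlgEquiv.image_setOf_aeval_eq_zero _ _
end

section
/- Let L be a finite field with 4 elements, let E be a finite field extension of L, let m ≥ 3 be odd, and let ω ∈ E have multiplicative order exactly m. Suppose there exists an integer s ≥ 0 with 2^{2s+1} ≡ −1 (mod m). Let b ≥ 0 and δ ≥ 2 be integers and set p = lcm{ M_{ω^b}, M_{ω^{b+1}}, …, M_{ω^{b+δ−2}} } ∈ L[x], where M_{ω^j} is the minimal polynomial of ω^j over L. Then p divides ( p(x^{(m−1)/2}) )² in L[x], i.e. p divides the square of the composition of p with x^{(m−1)/2}. (Equivalently, every root of p is a root of p̄(x^{m−1}) = α·p(x^{(m−1)/2})², so p divides p̄(x^{m−1}).) -/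
open Polynomial

/-!
Write `k = (m - 1) / 2`. Since `2k ≡ -1 ≡ 2 · 4^s (mod m)` and `2` is invertible mod `m`,
`k ≡ 4^s (mod m)`, so `θ ↦ θ^k` agrees on every power of `ω` with the `s`-th power of the
Frobenius `θ ↦ θ^4`, an `L`-algebra endomorphism of `E`. Hence `θ^k` is a root of `p` whenever
`θ = ω^(b+j)` is one, i.e. every `M_{ω^(b+j)}` divides `p(x^k)`, and so does their lcm `p`.
-/

theorem ZMod.natCast_pred_div_two_eq_of_two_mul_eq_neg_one {m : ℕ} (hm : Odd m) {a : ZMod m}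
    (ha : 2 * a = -1) : (((m - 1) / 2 : ℕ) : ZMod m) = a := by
  have h2 : IsUnit (2 : ZMod m) :=
    (ZMod.isUnit_iff_coprime 2 m).mpr (Nat.coprime_two_left.mpr hm)
  refine h2.mul_left_cancel (ha.symm ▸ ?_)
  obtain ⟨t, rfl⟩ := hm
  have hself : ((2 * t + 1 : ℕ) : ZMod (2 * t + 1)) = 0 := ZMod.natCast_self _
  push_cast at hself
  rw [add_tsub_cancel_right, Nat.mul_div_cancel_left t two_pos]
  linear_combination hself

theorem minpoly_dvd_comp_X_pow_of_modEq {K R : Type*} [Field K] [Fintype K] [CommRing R]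
    [Algebra K R] {θ : R} {p : K[X]} (hp : minpoly K θ ∣ p) {k n : ℕ}
    (hk : k ≡ Fintype.card K ^ n [MOD orderOf θ]) : minpoly K θ ∣ p.comp (X ^ k) := by
  have hθ : θ ^ k = (FiniteField.frobeniusAlgHom K R ^ n) θ := by
    rw [AlgHom.coe_pow, FiniteField.coe_frobeniusAlgHom, pow_iterate, ← pow_mod_orderOf, hk,
      pow_mod_orderOf]
  rw [minpoly.dvd_iff] at hp ⊢
  rw [aeval_comp, map_pow, aeval_X, hθ, aeval_algHom_apply, hp, map_zero]

theorem bch_generator_divides_companion_general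
    (L E : Type*) [Field L] [Field E] [Algebra L E] [DecidableEq L]
    [Fintype L] (hcard : Fintype.card L = 4)
    (m : ℕ) (hodd : Odd m)
    (ω : E) (hω : orderOf ω = m)
    (hs : ∃ s : ℕ, (2 : ZMod m) ^ (2 * s + 1) = -1)
    (b : ℕ) (δ : ℕ)
    (p : L[X])
    (hp : p = (Finset.range (δ - 1)).lcm (fun j => minpoly L (ω ^ (b + j)))) :
    p ∣ (p.comp (X ^ ((m - 1) / 2))) ^ 2 := by
  obtain ⟨s, hs⟩ := hs
  have hk : (m - 1) / 2 ≡ Fintype.card L ^ s [MOD m] := by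
    rw [hcard, ← ZMod.natCast_eq_natCast_iff]
    refine ZMod.natCast_pred_div_two_eq_of_two_mul_eq_neg_one hodd ?_
    rw [← hs, pow_succ', pow_mul]
    norm_num
  refine dvd_pow (?_ : p ∣ p.comp _) two_ne_zero
  conv_lhs => rw [hp]
  refine Finset.lcm_dvd fun j hj => minpoly_dvd_comp_X_pow_of_modEq ?_ (hk.of_dvd ?_)
  · exact hp ▸ Finset.dvd_lcm hj
  · exact hω ▸ orderOf_pow_dvd _

/-- If there exists `s` with `2^{2s+1} ≡ −1 (mod m)`, then the generator
`p = lcm{M_{ω^b}, …, M_{ω^{b+δ−2}}}` of a binary BCH-dihedral code divides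
`(p(x^{(m−1)/2}))²` in `F_4[x]` (equivalently, `p` divides its companion
`p̄(x^{m−1}) = α·p(x^{(m−1)/2})²`). -/
theorem bch_generator_divides_companion
    (L E : Type*) [Field L] [Field E] [Algebra L E] [DecidableEq L]
    [Fintype L] [Fintype E] (hcard : Fintype.card L = 4)
    (m : ℕ) (hm : 3 ≤ m) (hodd : Odd m)
    (ω : E) (hω : orderOf ω = m)
    (hs : ∃ s : ℕ, (2 : ZMod m) ^ (2 * s + 1) = -1)
    (b : ℕ) (δ : ℕ) (hδ : 2 ≤ δ)
    (p : L[X])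
    (hp : p = (Finset.range (δ - 1)).lcm (fun j => minpoly L (ω ^ (b + j)))) :
    p ∣ (p.comp (X ^ ((m - 1) / 2))) ^ 2 :=
  bch_generator_divides_companion_general L E hcard m hodd ω hω hs b δ p hp
end
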